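/- Let k : ℝ × X → [0,∞) be measurable and integrable on ℝ × X, and let N > 0 be such that ρ_N := ∫_X ∫_{−N}^{N} k(s,τ) ds dμ(τ) > 1. Then every bounded continuous function y : ℝ → [0,∞) satisfying y(t) = ∫_X (∫_ℝ k(s,τ) y(t−s) ds) dμ(τ) for all t ∈ ℝ satisfies, for all t' < t, ∫_{t'}^{t} y(v) dv ≤ 2 (∫_X ∫_{−N}^{N} |s| k(s,τ) ds dμ(τ)) / (ρ_N − 1); in particular y is Lebesgue integrable on ℝ. -/

import Mathlib

open MeasureTheory Filter Set

open scoped ENNReal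

/-! With `g = ofReal ∘ y`, the equation reads `g t = ∫⁻ s, g (t - s) ∂λ` for the finite measure `λ`
on `ℝ` obtained as the `s`-marginal of `k(s, τ) ds dμ(τ)`. Integrating it over a window `(a, b]`
and comparing `(a, b]` with its shifts `(a - s, b - s]`, `|s| ≤ N`, which differ from it by two
pieces of length at most `N`, gives `ρ J ≤ J + 2 M N ρ` for `J = ∫_{(a,b]} g` and
`ρ = λ [-N, N] > 1`. So the window integrals, hence `∫ g`, are bounded. Integrating the equation
over all of `ℝ` then gives `∫ g = λ ℝ * ∫ g` with `λ ℝ > 1`, so `∫ g = 0`: the continuous `y`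
vanishes identically and both claims hold trivially. -/

theorem lintegral_le_of_forall_setLIntegral_Ioc_le {f : ℝ → ℝ≥0∞} {B : ℝ≥0∞}
    (h : ∀ a b, ∫⁻ v in Ioc a b, f v ≤ B) : ∫⁻ v, f v ≤ B := by
  have hunion : ⋃ n : ℕ, Ioc (-(n : ℝ)) n = univ := by
    refine eq_univ_of_forall fun v => mem_iUnion.2 ?_
    obtain ⟨n, hn⟩ := exists_nat_gt |v|
    exact ⟨n, by linarith [neg_abs_le v], by linarith [le_abs_self v]⟩
  have hmono : Monotone fun n : ℕ => Ioc (-(n : ℝ)) n := fun m n hmn =>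
    Ioc_subset_Ioc (neg_le_neg (Nat.cast_le.2 hmn)) (Nat.cast_le.2 hmn)
  rw [← setLIntegral_univ, ← hunion, setLIntegral_iUnion_of_directed _ hmono.directed_le]
  exact iSup_le fun n => h _ _

theorem Ioc_subset_Ioc_sub_union_Ioc_union_Ioc {a b s N : ℝ} (hs : |s| ≤ N) :
    Ioc a b ⊆ Ioc (a - s) (b - s) ∪ Ioc a (a + N) ∪ Ioc (b - N) b := by
  intro v ⟨hav, hvb⟩
  have := abs_le.1 hs
  simp only [mem_union, mem_Ioc]
  by_contra!
  grind

theorem ENNReal.le_div_tsub_one_of_mul_le_add {ρ J D : ℝ≥0∞} (hJ : J ≠ ⊤) (hD : D ≠ ⊤)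
    (hρ : 1 < ρ) (h : ρ * J ≤ J + D) : J ≤ D / (ρ - 1) := by
  have hρJ : (ρ - 1) * J + J = ρ * J := by
    rw [← add_one_mul _ J, tsub_add_cancel_of_le hρ.le]
  rw [ENNReal.le_div_iff_mul_le (Or.inl (tsub_pos_of_lt hρ).ne') (Or.inr hD), mul_comm]
  rw [← hρJ, add_comm J] at h
  exact (ENNReal.add_le_add_iff_right hJ).1 h

section Renewal

variable {ν : Measure ℝ} {g : ℝ → ℝ≥0∞}

theorem setLIntegral_eq_lintegral_setLIntegral_preimage_add [SFinite ν] (hg : Measurable g)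
    (hgν : ∀ t, g t = ∫⁻ s, g (t - s) ∂ν) (E : Set ℝ) :
    ∫⁻ v in E, g v = ∫⁻ s, (∫⁻ u in (· + s) ⁻¹' E, g u) ∂ν := by
  have hshift (s : ℝ) : ∫⁻ v in E, g (v - s) = ∫⁻ u in (· + s) ⁻¹' E, g u := by
    simpa using ((measurePreserving_add_right volume s).setLIntegral_comp_preimage_emb
      (measurableEmbedding_addRight s) (fun v => g (v - s)) E).symm
  calc ∫⁻ v in E, g v = ∫⁻ v in E, ∫⁻ s, g (v - s) ∂ν := lintegral_congr fun v => hgν v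
    _ = ∫⁻ s, (∫⁻ v in E, g (v - s)) ∂ν :=
      lintegral_lintegral_swap (hg.comp (measurable_fst.sub measurable_snd)).aemeasurable
    _ = ∫⁻ s, (∫⁻ u in (· + s) ⁻¹' E, g u) ∂ν := lintegral_congr hshift

theorem lintegral_eq_measure_univ_mul [SFinite ν] (hg : Measurable g)
    (hgν : ∀ t, g t = ∫⁻ s, g (t - s) ∂ν) :
    ∫⁻ v, g v = ν univ * ∫⁻ v, g v := by
  simpa [mul_comm] using setLIntegral_eq_lintegral_setLIntegral_preimage_add hg hgν univ

theorem setLIntegral_Ioc_le_mul {C : ℝ≥0∞} (hgC : ∀ v, g v ≤ C) (a b : ℝ) :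
    ∫⁻ v in Ioc a b, g v ≤ C * ENNReal.ofReal (b - a) := by
  calc ∫⁻ v in Ioc a b, g v ≤ ∫⁻ _ in Ioc a b, C := lintegral_mono hgC
    _ = C * ENNReal.ofReal (b - a) := by rw [setLIntegral_const, Real.volume_Ioc]

theorem setLIntegral_Ioc_le_of_one_lt_measure_Icc [SFinite ν] (hg : Measurable g)
    (hgν : ∀ t, g t = ∫⁻ s, g (t - s) ∂ν) {C : ℝ≥0∞} (hC : C ≠ ⊤) (hgC : ∀ v, g v ≤ C)
    {N : ℝ} (hνN : ν (Icc (-N) N) ≠ ⊤) (hρ : 1 < ν (Icc (-N) N)) (a b : ℝ) :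
    ∫⁻ v in Ioc a b, g v ≤
      2 * C * ENNReal.ofReal N * ν (Icc (-N) N) / (ν (Icc (-N) N) - 1) := by
  set ρ := ν (Icc (-N) N)
  set J := ∫⁻ v in Ioc a b, g v
  set D := 2 * C * ENNReal.ofReal N
  have hJ : J ≠ ⊤ := ((setLIntegral_Ioc_le_mul hgC a b).trans_lt (by finiteness)).ne
  have hshift (s : ℝ) (hs : s ∈ Icc (-N) N) : J ≤ (∫⁻ u in Ioc (a - s) (b - s), g u) + D := by
    calc J ≤ ∫⁻ v in Ioc (a - s) (b - s) ∪ Ioc a (a + N) ∪ Ioc (b - N) b, g v :=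
          lintegral_mono_set (Ioc_subset_Ioc_sub_union_Ioc_union_Ioc (abs_le.2 hs))
      _ ≤ (∫⁻ u in Ioc (a - s) (b - s), g u) + (∫⁻ v in Ioc a (a + N), g v)
            + ∫⁻ v in Ioc (b - N) b, g v :=
          (lintegral_union_le _ _ _).trans (add_le_add_left (lintegral_union_le _ _ _) _)
      _ ≤ (∫⁻ u in Ioc (a - s) (b - s), g u) + C * ENNReal.ofReal N + C * ENNReal.ofReal N := by
          gcongr
          · simpa using setLIntegral_Ioc_le_mul hgC a (a + N)
          · simpa using setLIntegral_Ioc_le_mul hgC (b - N) b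
      _ = (∫⁻ u in Ioc (a - s) (b - s), g u) + D := by ring
  refine ENNReal.le_div_tsub_one_of_mul_le_add hJ (by finiteness) hρ ?_
  calc ρ * J = ∫⁻ _ in Icc (-N) N, J ∂ν := by rw [setLIntegral_const, mul_comm]
    _ ≤ ∫⁻ s in Icc (-N) N, ((∫⁻ u in Ioc (a - s) (b - s), g u) + D) ∂ν :=
        setLIntegral_mono' measurableSet_Icc hshift
    _ = (∫⁻ s in Icc (-N) N, (∫⁻ u in Ioc (a - s) (b - s), g u) ∂ν) + D * ρ := by
        rw [lintegral_add_right _ measurable_const, setLIntegral_const]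
    _ ≤ J + D * ρ := by
        gcongr
        calc _ ≤ ∫⁻ s, (∫⁻ u in Ioc (a - s) (b - s), g u) ∂ν := setLIntegral_le_lintegral _ _
          _ = J := by
            simp only [J, setLIntegral_eq_lintegral_setLIntegral_preimage_add hg hgν (Ioc a b),
              preimage_add_const_Ioc]

theorem lintegral_eq_zero_of_one_lt_measure_Icc [SFinite ν] (hg : Measurable g)
    (hgν : ∀ t, g t = ∫⁻ s, g (t - s) ∂ν) {C : ℝ≥0∞} (hC : C ≠ ⊤) (hgC : ∀ v, g v ≤ C)
    {N : ℝ} (hνN : ν (Icc (-N) N) ≠ ⊤) (hρ : 1 < ν (Icc (-N) N)) :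
    ∫⁻ v, g v = 0 := by
  have hfin : ∫⁻ v, g v ≠ ⊤ :=
    ne_top_of_le_ne_top (ENNReal.div_lt_top (by finiteness) (tsub_pos_of_lt hρ).ne').ne
      (lintegral_le_of_forall_setLIntegral_Ioc_le
        (setLIntegral_Ioc_le_of_one_lt_measure_Icc hg hgν hC hgC hνN hρ))
  by_contra h0
  have hν : 1 < ν univ := hρ.trans_le (measure_mono (subset_univ _))
  have := ENNReal.mul_lt_mul_right h0 hfin hν
  rw [mul_one, mul_comm, ← lintegral_eq_measure_univ_mul hg hgν] at this
  exact this.false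

end Renewal

theorem ofReal_integral_le_lintegral_ofReal {α : Type*} [MeasurableSpace α] {μ : Measure α}
    {f : α → ℝ} (hf : ∀ x, 0 ≤ f x) :
    ENNReal.ofReal (∫ x, f x ∂μ) ≤ ∫⁻ x, ENNReal.ofReal (f x) ∂μ := by
  calc ENNReal.ofReal (∫ x, f x ∂μ) = ‖∫ x, f x ∂μ‖ₑ :=
        (Real.enorm_of_nonneg (integral_nonneg hf)).symm
    _ ≤ ∫⁻ x, ‖f x‖ₑ ∂μ := enorm_integral_le_lintegral_enorm _
    _ = ∫⁻ x, ENNReal.ofReal (f x) ∂μ := lintegral_congr fun x => Real.enorm_of_nonneg (hf x)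

section Kernel

variable {X : Type*} [MeasurableSpace X] {μ : Measure X} {k : ℝ → X → ℝ}

noncomputable def kernelMarginal (μ : Measure X) (k : ℝ → X → ℝ) : Measure ℝ :=
  ((volume.prod μ).withDensity fun p => ENNReal.ofReal (k p.1 p.2)).fst

theorem lintegral_kernelMarginal [SFinite μ] (hk : Measurable fun p : ℝ × X => k p.1 p.2)
    {f : ℝ → ℝ≥0∞} (hf : Measurable f) :
    ∫⁻ s, f s ∂kernelMarginal μ k = ∫⁻ p, ENNReal.ofReal (k p.1 p.2) * f p.1 ∂volume.prod μ := by
  rw [kernelMarginal, Measure.fst, lintegral_map hf measurable_fst,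
    lintegral_withDensity_eq_lintegral_mul _ (by fun_prop) (by fun_prop)]
  rfl

theorem isFiniteMeasure_kernelMarginal
    (hk : Integrable (fun p : ℝ × X => k p.1 p.2) (volume.prod μ)) :
    IsFiniteMeasure (kernelMarginal μ k) :=
  have := isFiniteMeasure_withDensity_ofReal hk.2
  inferInstanceAs (IsFiniteMeasure (Measure.fst _))

theorem ofReal_integral_setIntegral_le_kernelMarginal [SFinite μ]
    (hk : Measurable fun p : ℝ × X => k p.1 p.2) (hk0 : ∀ s τ, 0 ≤ k s τ)
    (E : Set ℝ) (hE : MeasurableSet E) :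
    ENNReal.ofReal (∫ τ, (∫ s in E, k s τ) ∂μ) ≤ kernelMarginal μ k E := by
  calc ENNReal.ofReal (∫ τ, (∫ s in E, k s τ) ∂μ)
      ≤ ∫⁻ τ, ENNReal.ofReal (∫ s in E, k s τ) ∂μ :=
        ofReal_integral_le_lintegral_ofReal fun τ => integral_nonneg fun s => hk0 s τ
    _ ≤ ∫⁻ τ, (∫⁻ s in E, ENNReal.ofReal (k s τ)) ∂μ :=
        lintegral_mono fun τ => ofReal_integral_le_lintegral_ofReal fun s => hk0 s τ
    _ = kernelMarginal μ k E := by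
        rw [kernelMarginal, Measure.fst_apply hE, withDensity_apply _ (measurable_fst hE),
          ← prod_univ, ← Measure.prod_restrict, Measure.restrict_univ,
          lintegral_prod_symm _ (by fun_prop)]

theorem ofReal_eq_lintegral_kernelMarginal [SFinite μ]
    (hk : Measurable fun p : ℝ × X => k p.1 p.2) (hk0 : ∀ s τ, 0 ≤ k s τ)
    (hkint : Integrable (fun p : ℝ × X => k p.1 p.2) (volume.prod μ))
    {y : ℝ → ℝ} (hy : Measurable y) (hy0 : ∀ t, 0 ≤ y t) {M : ℝ} (hyM : ∀ t, y t ≤ M) {t : ℝ}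
    (hyt : y t = ∫ τ, (∫ s, k s τ * y (t - s)) ∂μ) :
    ENNReal.ofReal (y t) = ∫⁻ s, ENNReal.ofReal (y (t - s)) ∂kernelMarginal μ k := by
  have hint : Integrable (fun p : ℝ × X => k p.1 p.2 * y (t - p.1)) (volume.prod μ) := by
    refine (hkint.mul_const M).mono' (by fun_prop) (Eventually.of_forall fun p => ?_)
    rw [Real.norm_of_nonneg (mul_nonneg (hk0 _ _) (hy0 _))]
    exact mul_le_mul_of_nonneg_left (hyM _) (hk0 _ _)
  rw [lintegral_kernelMarginal hk (by fun_prop), hyt, ← integral_prod_symm _ hint,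
    ofReal_integral_eq_lintegral_ofReal hint
      (Eventually.of_forall fun p => mul_nonneg (hk0 _ _) (hy0 _))]
  exact lintegral_congr fun p => ENNReal.ofReal_mul (hk0 _ _)

end Kernel

theorem stmt9_general
    {X : Type*} [MeasurableSpace X] (μ : Measure X) [IsFiniteMeasure μ]
    (k : ℝ → X → ℝ)
    (hkmeas : Measurable fun p : ℝ × X => k p.1 p.2)
    (hknn : ∀ s τ, 0 ≤ k s τ)
    (hkint : Integrable (fun p : ℝ × X => k p.1 p.2) ((volume : Measure ℝ).prod μ))
    (N : ℝ)
    (hρ : 1 < ∫ τ, (∫ s in Icc (-N) N, k s τ) ∂μ)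
    (y : ℝ → ℝ) (hyc : Continuous y) (hynn : ∀ t, 0 ≤ y t)
    (hybd : ∃ M, ∀ t, y t ≤ M)
    (hyeq : ∀ t, y t = ∫ τ, (∫ s, k s τ * y (t - s)) ∂μ)
    :
    (∀ t' t : ℝ, t' < t → (∫ v in t'..t, y v) ≤
      2 * (∫ τ, (∫ s in Icc (-N) N, |s| * k s τ) ∂μ) /
        ((∫ τ, (∫ s in Icc (-N) N, k s τ) ∂μ) - 1)) ∧
    Integrable y := by
  obtain ⟨M, hM⟩ := hybd
  have := isFiniteMeasure_kernelMarginal hkint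
  have hρν : 1 < kernelMarginal μ k (Icc (-N) N) := (ENNReal.one_lt_ofReal.2 hρ).trans_le
    (ofReal_integral_setIntegral_le_kernelMarginal hkmeas hknn _ measurableSet_Icc)
  have hconv (t : ℝ) :
      ENNReal.ofReal (y t) = ∫⁻ s, ENNReal.ofReal (y (t - s)) ∂kernelMarginal μ k :=
    ofReal_eq_lintegral_kernelMarginal hkmeas hknn hkint hyc.measurable hynn hM (hyeq t)
  have hlint : ∫⁻ v, ENNReal.ofReal (y v) = 0 :=
    lintegral_eq_zero_of_one_lt_measure_Icc (by fun_prop) hconv ENNReal.ofReal_ne_top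
      (fun v => ENNReal.ofReal_le_ofReal (hM v)) (measure_ne_top _ _) hρν
  have hy0 : y = 0 := by
    refine (hyc.ae_eq_iff_eq volume continuous_const).1 ?_
    filter_upwards [(lintegral_eq_zero_iff (by fun_prop)).1 hlint] with v hv
    exact le_antisymm (ENNReal.ofReal_eq_zero.1 hv) (hynn v)
  subst hy0
  refine ⟨fun t' t _ => ?_, integrable_zero _ _ _⟩
  simp only [Pi.zero_apply, intervalIntegral.integral_zero]
  refine div_nonneg (mul_nonneg zero_le_two ?_) (sub_nonneg.2 hρ.le)
  exact integral_nonneg fun τ => integral_nonneg fun s => mul_nonneg (abs_nonneg s) (hknn s τ)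

theorem stmt9
    {X : Type*} [MeasurableSpace X] (μ : Measure X) [IsFiniteMeasure μ]
    (k : ℝ → X → ℝ)
    (hkmeas : Measurable fun p : ℝ × X => k p.1 p.2)
    (hknn : ∀ s τ, 0 ≤ k s τ)
    (hkint : Integrable (fun p : ℝ × X => k p.1 p.2) ((volume : Measure ℝ).prod μ))
    (N : ℝ) (hN : 0 < N)
    (hρ : 1 < ∫ τ, (∫ s in Icc (-N) N, k s τ) ∂μ)
    (y : ℝ → ℝ) (hyc : Continuous y) (hynn : ∀ t, 0 ≤ y t)
    (hybd : ∃ M, ∀ t, y t ≤ M)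
    (hyeq : ∀ t, y t = ∫ τ, (∫ s, k s τ * y (t - s)) ∂μ)
    :
    (∀ t' t : ℝ, t' < t → (∫ v in t'..t, y v) ≤
      2 * (∫ τ, (∫ s in Icc (-N) N, |s| * k s τ) ∂μ) /
        ((∫ τ, (∫ s in Icc (-N) N, k s τ) ∂μ) - 1)) ∧
    Integrable y :=
  stmt9_general μ k hkmeas hknn hkint N hρ y hyc hynn hybd hyeq
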